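/- In a tree, every longest path is a central path; that is, if P is a longest path of a tree T then ecc_T(P) = pe(T). -/

import Mathlib

open SimpleGraph

variable {V : Type*} [Fintype V] [DecidableEq V]

/-- Distance from a vertex `u` to the vertex set of a walk `P`. -/
noncomputable def walkDist (G : SimpleGraph V) {a b : V} (P : G.Walk a b) (u : V) : ℕ :=
  P.support.toFinset.inf' ⟨a, List.mem_toFinset.mpr P.start_mem_support⟩ (fun x => G.dist u x)

/-- Eccentricity of a walk: max distance from any vertex of `G` to the walk. -/
noncomputable def eccW (G : SimpleGraph V) {a b : V} (P : G.Walk a b) : ℕ :=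
  Finset.univ.sup (walkDist G P)

/-- Path eccentricity of a graph. -/
noncomputable def pe (G : SimpleGraph V) : ℕ :=
  sInf {m | ∃ (a b : V) (P : G.Walk a b), P.IsPath ∧ eccW G P = m}

/-- `P` is a longest path in `G`. -/
def IsLongestPath (G : SimpleGraph V) {a b : V} (P : G.Walk a b) : Prop :=
  P.IsPath ∧ ∀ (c d : V) (Q : G.Walk c d), Q.IsPath → Q.length ≤ P.length

/-- `G` is `k`-connected. -/
def KConnected (k : ℕ) (G : SimpleGraph V) : Prop :=
  k + 1 ≤ Fintype.card V ∧
    ∀ S : Finset V, S.card < k → (G.induce ((↑S : Set V)ᶜ)).Connected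

/-!
Let `u` be a vertex at distance `e = ecc(P)` from the longest path `P` from `a` to `b`, and let
`x` be a vertex of `P` nearest to `u`. Maximality of `P` gives `d(a, x) ≥ e` and `d(b, x) ≥ e`, so
`a`, `b`, `u` are the ends of a tripod centred at `x` with legs of length at least `e`. If a path
`Q` had `ecc(Q) < e`, project `a`, `b`, `u` onto `Q`: one projection lies between the other two
along `Q`, hence on the geodesic joining the corresponding two ends, and every vertex of that
geodesic is at least as far from the third end as `x` is, a contradiction.

In a tree, `d(u, w) + d(w, v) = d(u, v)` says exactly that `w` lies on the `u`–`v` path, and the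
argument is run in these metric terms.
-/

namespace SimpleGraph

section TreeMetric

omit [Fintype V] [DecidableEq V]

variable {T : SimpleGraph V}

theorem dist_add_dist_symm {u v x : V} (h : T.dist u x + T.dist x v = T.dist u v) :
    T.dist v x + T.dist x u = T.dist v u := by
  rw [dist_comm (u := v), dist_comm (u := x) (v := u), dist_comm (u := v) (v := u)]
  omega

theorem Walk.IsPath.append {u v w : V} {p : T.Walk u v} {q : T.Walk v w}
    (hp : p.IsPath) (hq : q.IsPath) (h : ∀ y ∈ p.support, y ∈ q.support → y = v) :
    (p.append q).IsPath := by
  rw [Walk.isPath_def, Walk.support_append, List.nodup_append]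
  refine ⟨hp.support_nodup, hq.support_nodup.tail, fun y hyp z hyq hyz => ?_⟩
  subst hyz
  obtain rfl := h y hyp (List.mem_of_mem_tail hyq)
  have hnd := hq.support_nodup
  rw [← q.cons_tail_support] at hnd
  exact (List.nodup_cons.mp hnd).1 hyq

theorem Walk.exists_isPath_support_subset [DecidableEq V] {u v y z : V} (p : T.Walk u v)
    (hy : y ∈ p.support) (hz : z ∈ p.support) :
    ∃ r : T.Walk y z, r.IsPath ∧ r.support ⊆ p.support := by
  refine ⟨((p.takeUntil y hy).reverse.append (p.takeUntil z hz)).bypass, Walk.bypass_isPath _,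
    fun t ht => ?_⟩
  have ht' := Walk.support_bypass_subset_support _ ht
  rw [Walk.mem_support_append_iff, Walk.support_reverse, List.mem_reverse] at ht'
  exact ht'.elim (p.support_takeUntil_subset_support hy ·) (p.support_takeUntil_subset_support hz ·)

theorem IsTree.length_eq_dist (hT : T.IsTree) {u v : V} {p : T.Walk u v} (hp : p.IsPath) :
    p.length = T.dist u v := by
  obtain ⟨q, hq, hlen⟩ := hT.connected.exists_path_of_dist u v
  obtain rfl := (hT.existsUnique_path u v).unique hp hq
  exact hlen

theorem IsTree.dist_add_dist_of_isPath_append (hT : T.IsTree) {u v w : V} {p : T.Walk u v}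
    {q : T.Walk v w} (hpq : (p.append q).IsPath) :
    T.dist u v + T.dist v w = T.dist u w := by
  rw [← hT.length_eq_dist hpq, Walk.length_append, hT.length_eq_dist hpq.of_append_left,
    hT.length_eq_dist hpq.of_append_right]

theorem IsTree.dist_add_dist_of_mem_support (hT : T.IsTree) {u v w : V} {p : T.Walk u v}
    (hp : p.IsPath) (hw : w ∈ p.support) :
    T.dist u w + T.dist w v = T.dist u v := by
  classical
  rw [← p.take_spec hw] at hp
  exact hT.dist_add_dist_of_isPath_append hp

theorem IsTree.isPath_append_of_dist_add_dist (hT : T.IsTree) {u v w : V} {p : T.Walk u v}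
    {q : T.Walk v w} (hp : p.IsPath) (hq : q.IsPath)
    (h : T.dist u v + T.dist v w = T.dist u w) :
    (p.append q).IsPath := by
  refine hp.append hq fun y hyp hyq => ?_
  have hy₁ := hT.dist_add_dist_of_mem_support hp hyp
  have hy₂ := hT.dist_add_dist_of_mem_support hq hyq
  have htri : T.dist u w ≤ T.dist u y + T.dist y w := hT.connected.dist_triangle
  have hyv : T.dist y v = T.dist v y := dist_comm
  exact hT.connected.dist_eq_zero_iff.mp (by omega)

theorem IsTree.mem_support_of_dist_add_dist (hT : T.IsTree) {u v w : V} {p : T.Walk u v}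
    (hp : p.IsPath) (h : T.dist u w + T.dist w v = T.dist u v) : w ∈ p.support := by
  obtain ⟨q, hq, -⟩ := hT.connected.exists_path_of_dist u w
  obtain ⟨r, hr, -⟩ := hT.connected.exists_path_of_dist w v
  have hqr := hT.isPath_append_of_dist_add_dist hq hr h
  obtain rfl := (hT.existsUnique_path u v).unique hqr hp
  exact (Walk.mem_support_append_iff q r).mpr (Or.inl q.end_mem_support)

theorem IsTree.dist_add_dist_left_or_right (hT : T.IsTree) {u v x s : V}
    (hx : T.dist u x + T.dist x v = T.dist u v) (hs : T.dist u s + T.dist s v = T.dist u v) :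
    T.dist u s + T.dist s x = T.dist u x ∨ T.dist x s + T.dist s v = T.dist x v := by
  obtain ⟨p, hp, -⟩ := hT.connected.exists_path_of_dist u x
  obtain ⟨q, hq, -⟩ := hT.connected.exists_path_of_dist x v
  have hpq := hT.isPath_append_of_dist_add_dist hp hq hx
  rcases (Walk.mem_support_append_iff p q).mp (hT.mem_support_of_dist_add_dist hpq hs) with h | h
  · exact Or.inl (hT.dist_add_dist_of_mem_support hp h)
  · exact Or.inr (hT.dist_add_dist_of_mem_support hq h)

theorem IsTree.dist_add_dist_trichotomy (hT : T.IsTree) {u v x y z : V}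
    (hx : T.dist u x + T.dist x v = T.dist u v) (hy : T.dist u y + T.dist y v = T.dist u v)
    (hz : T.dist u z + T.dist z v = T.dist u v) :
    T.dist x z + T.dist z y = T.dist x y ∨ T.dist y x + T.dist x z = T.dist y z ∨
      T.dist x y + T.dist y z = T.dist x z := by
  have hxy := hT.dist_add_dist_left_or_right hx hy
  have hxz := hT.dist_add_dist_left_or_right hx hz
  have hyz := hT.dist_add_dist_left_or_right hy hz
  have c₁ : T.dist x y = T.dist y x := dist_comm
  have c₂ : T.dist x z = T.dist z x := dist_comm
  have c₃ : T.dist y z = T.dist z y := dist_comm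
  omega

theorem IsTree.dist_le_dist_of_dist_add_dist (hT : T.IsTree) {v₁ v₂ v₃ x s : V}
    (h₁₂ : T.dist v₁ x + T.dist x v₂ = T.dist v₁ v₂)
    (h₃₁ : T.dist v₃ x + T.dist x v₁ = T.dist v₃ v₁)
    (h₃₂ : T.dist v₃ x + T.dist x v₂ = T.dist v₃ v₂)
    (hs : T.dist v₁ s + T.dist s v₂ = T.dist v₁ v₂) :
    T.dist v₃ x ≤ T.dist v₃ s := by
  have hsx : T.dist s x = T.dist x s := dist_comm
  rcases hT.dist_add_dist_left_or_right h₁₂ hs with h | h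
  · have htri : T.dist v₃ v₁ ≤ T.dist v₃ s + T.dist s v₁ := hT.connected.dist_triangle
    have hs₁ : T.dist s v₁ = T.dist v₁ s := dist_comm
    have hx₁ : T.dist x v₁ = T.dist v₁ x := dist_comm
    omega
  · have htri : T.dist v₃ v₂ ≤ T.dist v₃ s + T.dist s v₂ := hT.connected.dist_triangle
    omega

end TreeMetric

section Nearest

omit [Fintype V]

def IsNearest (G : SimpleGraph V) {c d : V} (Q : G.Walk c d) (w π : V) : Prop :=
  π ∈ Q.support ∧ G.dist w π = walkDist G Q w

variable {G : SimpleGraph V} {c d : V}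

theorem walkDist_le_dist (Q : G.Walk c d) (w : V) {s : V} (hs : s ∈ Q.support) :
    walkDist G Q w ≤ G.dist w s :=
  Finset.inf'_le _ (List.mem_toFinset.mpr hs)

theorem exists_isNearest (Q : G.Walk c d) (w : V) : ∃ π, IsNearest G Q w π := by
  obtain ⟨π, hπ, hdist⟩ := Finset.exists_mem_eq_inf' ⟨c, List.mem_toFinset.mpr Q.start_mem_support⟩
    (fun s => G.dist w s)
  exact ⟨π, List.mem_toFinset.mp hπ, hdist.symm⟩

variable {T : SimpleGraph V} {Q : T.Walk c d}

theorem IsTree.eq_of_mem_support_of_isNearest (hT : T.IsTree) {w π y : V}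
    (hπ : IsNearest T Q w π) {r : T.Walk w π} (hr : r.IsPath) (hy : y ∈ r.support)
    (hyQ : y ∈ Q.support) : y = π := by
  have h₁ := hT.dist_add_dist_of_mem_support hr hy
  have h₂ := walkDist_le_dist Q w hyQ
  exact hT.connected.dist_eq_zero_iff.mp (by rw [← hπ.2] at h₂; omega)

theorem IsTree.dist_add_dist_of_isNearest (hT : T.IsTree) {w π s : V} (hπ : IsNearest T Q w π)
    (hs : s ∈ Q.support) : T.dist w π + T.dist π s = T.dist w s := by
  obtain ⟨r, hr, -⟩ := hT.connected.exists_path_of_dist w π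
  obtain ⟨seg, hseg, hsegQ⟩ := Q.exists_isPath_support_subset hπ.1 hs
  exact hT.dist_add_dist_of_isPath_append <|
    hr.append hseg fun y hy hyseg => hT.eq_of_mem_support_of_isNearest hπ hr hy (hsegQ hyseg)

theorem IsTree.dist_eq_of_isNearest (hT : T.IsTree) {v w p q : V} (hp : IsNearest T Q v p)
    (hq : IsNearest T Q w q) (hfar : T.dist v p + T.dist w q < T.dist v w) :
    T.dist v p + T.dist p q + T.dist q w = T.dist v w := by
  obtain ⟨rv, hrv, -⟩ := hT.connected.exists_path_of_dist v p
  obtain ⟨rw, hrw, -⟩ := hT.connected.exists_path_of_dist w q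
  obtain ⟨seg, hseg, hsegQ⟩ := Q.exists_isPath_support_subset hp.1 hq.1
  have hvq : (rv.append seg).IsPath :=
    hrv.append hseg fun y hy hyseg => hT.eq_of_mem_support_of_isNearest hp hrv hy (hsegQ hyseg)
  have hvw : ((rv.append seg).append rw.reverse).IsPath := by
    refine hvq.append hrw.reverse fun y hy hyw => ?_
    rw [Walk.support_reverse, List.mem_reverse] at hyw
    rcases (Walk.mem_support_append_iff rv seg).mp hy with hy | hy
    · -- a common vertex of the two projecting paths would make `v` and `w` too close
      have h₁ := hT.dist_add_dist_of_mem_support hrv hy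
      have h₂ := hT.dist_add_dist_of_mem_support hrw hyw
      have htri : T.dist v w ≤ T.dist v y + T.dist y w := hT.connected.dist_triangle
      have hyw : T.dist y w = T.dist w y := dist_comm
      omega
    · exact hT.eq_of_mem_support_of_isNearest hq hrw hyw (hsegQ hy)
  have hlen := hT.dist_add_dist_of_isPath_append hvw
  rwa [← hT.dist_add_dist_of_isPath_append hvq] at hlen

theorem IsTree.dist_le_dist_of_isNearest (hT : T.IsTree) {v₁ v₂ v₃ x p₁ p₂ p₃ : V}
    (h₁₂ : T.dist v₁ x + T.dist x v₂ = T.dist v₁ v₂)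
    (h₃₁ : T.dist v₃ x + T.dist x v₁ = T.dist v₃ v₁)
    (h₃₂ : T.dist v₃ x + T.dist x v₂ = T.dist v₃ v₂)
    (hp₁ : IsNearest T Q v₁ p₁) (hp₂ : IsNearest T Q v₂ p₂) (hp₃ : p₃ ∈ Q.support)
    (hfar : T.dist v₁ p₁ + T.dist v₂ p₂ < T.dist v₁ v₂)
    (hmid : T.dist p₁ p₃ + T.dist p₃ p₂ = T.dist p₁ p₂) :
    T.dist v₃ x ≤ T.dist v₃ p₃ := by
  refine hT.dist_le_dist_of_dist_add_dist h₁₂ h₃₁ h₃₂ ?_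
  have h₁ := hT.dist_eq_of_isNearest hp₁ hp₂ hfar
  have h₂ := hT.dist_add_dist_of_isNearest hp₁ hp₃
  have h₃ := hT.dist_add_dist_of_isNearest hp₂ hp₃
  have c₁ : T.dist p₃ v₂ = T.dist v₂ p₃ := dist_comm
  have c₂ : T.dist p₂ v₂ = T.dist v₂ p₂ := dist_comm
  have c₃ : T.dist p₃ p₂ = T.dist p₂ p₃ := dist_comm
  omega

end Nearest

section Eccentricity

variable {G : SimpleGraph V} {c d : V}

theorem walkDist_le_eccW (Q : G.Walk c d) (w : V) : walkDist G Q w ≤ eccW G Q :=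
  Finset.le_sup (Finset.mem_univ w)

theorem exists_walkDist_eq_eccW [Nonempty V] (Q : G.Walk c d) :
    ∃ u, walkDist G Q u = eccW G Q := by
  obtain ⟨u, -, hu⟩ := Finset.exists_mem_eq_sup _ Finset.univ_nonempty (walkDist G Q)
  exact ⟨u, hu.symm⟩

variable {T : SimpleGraph V} {Q : T.Walk c d}

theorem IsTree.le_eccW_of_dist_add_dist (hT : T.IsTree) (hQ : Q.IsPath) {v₁ v₂ v₃ x : V}
    {e : ℕ} (h₁₂ : T.dist v₁ x + T.dist x v₂ = T.dist v₁ v₂)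
    (h₁₃ : T.dist v₁ x + T.dist x v₃ = T.dist v₁ v₃)
    (h₂₃ : T.dist v₂ x + T.dist x v₃ = T.dist v₂ v₃)
    (he₁ : e ≤ T.dist v₁ x) (he₂ : e ≤ T.dist v₂ x) (he₃ : e ≤ T.dist v₃ x) :
    e ≤ eccW T Q := by
  by_contra! hecc
  have near (v : V) : ∃ p, IsNearest T Q v p ∧ T.dist v p < e := by
    obtain ⟨p, hp⟩ := exists_isNearest Q v
    exact ⟨p, hp, hp.2 ▸ (walkDist_le_eccW Q v).trans_lt hecc⟩
  obtain ⟨p₁, hp₁, hlt₁⟩ := near v₁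
  obtain ⟨p₂, hp₂, hlt₂⟩ := near v₂
  obtain ⟨p₃, hp₃, hlt₃⟩ := near v₃
  have c₁ : T.dist x v₁ = T.dist v₁ x := dist_comm
  have c₂ : T.dist x v₂ = T.dist v₂ x := dist_comm
  have c₃ : T.dist x v₃ = T.dist v₃ x := dist_comm
  rcases hT.dist_add_dist_trichotomy (hT.dist_add_dist_of_mem_support hQ hp₁.1)
      (hT.dist_add_dist_of_mem_support hQ hp₂.1) (hT.dist_add_dist_of_mem_support hQ hp₃.1)
    with hmid | hmid | hmid
  · have := hT.dist_le_dist_of_isNearest h₁₂ (dist_add_dist_symm h₁₃) (dist_add_dist_symm h₂₃)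
      hp₁ hp₂ hp₃.1 (by omega) hmid
    omega
  · have := hT.dist_le_dist_of_isNearest h₂₃ h₁₂ h₁₃ hp₂ hp₃ hp₁.1 (by omega) hmid
    omega
  · have := hT.dist_le_dist_of_isNearest h₁₃ (dist_add_dist_symm h₁₂) h₂₃
      hp₁ hp₃ hp₂.1 (by omega) hmid
    omega

theorem IsTree.eccW_le_eccW_of_isLongestPath (hT : T.IsTree) {a b : V} {P : T.Walk a b}
    (hP : IsLongestPath T P) (hQ : Q.IsPath) : eccW T P ≤ eccW T Q := by
  have : Nonempty V := hT.connected.nonempty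
  obtain ⟨u, hu⟩ := exists_walkDist_eq_eccW P
  obtain ⟨x, hx⟩ := exists_isNearest P u
  have hab := hT.dist_add_dist_of_mem_support hP.1 hx.1
  have hua := hT.dist_add_dist_of_isNearest hx P.start_mem_support
  have hub := hT.dist_add_dist_of_isNearest hx P.end_mem_support
  have hdiam (v w : V) : T.dist v w ≤ T.dist a b := by
    obtain ⟨r, hr, hlen⟩ := hT.connected.exists_path_of_dist v w
    rw [← hlen, ← hT.length_eq_dist hP.1]
    exact hP.2 v w r hr
  have c₁ : T.dist x a = T.dist a x := dist_comm
  have c₂ : T.dist x b = T.dist b x := dist_comm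
  have c₃ : T.dist x u = T.dist u x := dist_comm
  have c₄ : T.dist b u = T.dist u b := dist_comm
  have c₅ : T.dist a u = T.dist u a := dist_comm
  have hub' := hdiam u b
  have hau := hdiam a u
  rw [← hu, ← hx.2]
  refine hT.le_eccW_of_dist_add_dist hQ (v₁ := a) (v₂ := b) (v₃ := u) hab ?_ ?_ ?_ ?_ le_rfl <;>
    omega

end Eccentricity

end SimpleGraph

theorem stmt12 (T : SimpleGraph V) (hT : T.IsTree)
    {a b : V} (P : T.Walk a b) (hP : IsLongestPath T P) :
    eccW T P = pe T := by
  have hmem : eccW T P ∈ {m | ∃ (a b : V) (P' : T.Walk a b), P'.IsPath ∧ eccW T P' = m} :=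
    ⟨a, b, P, hP.1, rfl⟩
  refine le_antisymm (le_csInf ⟨_, hmem⟩ ?_) (Nat.sInf_le hmem)
  rintro m ⟨c, d, Q, hQ, rfl⟩
  exact hT.eccW_le_eccW_of_isLongestPath hP hQ
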